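/- Normalized packing corollary. Under the setup of the normalized packing invariant (m ≥ 1, ε > 0, points x_1,…,x_s ∈ P with 0 ≤ f_j(x_ℓ) ≤ 1, weights Y_j(t) = ∏_{ℓ≤t}(1 + ε f_j(x_ℓ)), dual values v_t with average v̄, and λ̄ = max_j (1/s) Σ_ℓ f_j(x_ℓ)), suppose additionally that λ* > 0 is a real with λ* ≤ λ̄ and s ≥ (1+ε)·ln(m) / (λ*·b(ε)), where b(ε) = (1+ε)ln(1+ε) − ε. Then λ̄ ≤ (1+ε)·v̄. -/

import Mathlib

/-!
The potential `Φ_t = ∑ⱼ Y_j(t)` of the multiplicative weights method satisfies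
`Φ_{t+1} = Φ_t (1 + ε v_t) ≤ Φ_t exp (ε v_t)`, so `ln Φ_s ≤ ln m + ε s v̄`. By Bernoulli's
inequality `Y_j(s) ≥ (1 + ε) ^ (∑ₗ f_j(x_ℓ))`, so a coordinate attaining `λ̄` gives
`s λ̄ ln (1 + ε) ≤ ln m + ε s v̄`. The bound on `s` says
`ln m ≤ s λ* b(ε) / (1 + ε) ≤ s λ̄ b(ε) / (1 + ε)`, and since
`ln (1 + ε) - b(ε) / (1 + ε) = ε / (1 + ε)` what remains is `s λ̄ ε / (1 + ε) ≤ ε s v̄`.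
-/

open Finset Real

theorem one_add_mul_log_one_add_sub_self_pos {ε : ℝ} (hε : 0 < ε) :
    0 < (1 + ε) * log (1 + ε) - ε := by
  have hinv : log (1 + ε)⁻¹ < (1 + ε)⁻¹ - 1 :=
    log_lt_sub_one_of_pos (by positivity) (inv_ne_one.2 (by linarith))
  have hmul : (1 + ε) * ((1 + ε)⁻¹ - 1) = -ε := by field_simp; ring
  rw [log_inv] at hinv
  nlinarith

theorem one_add_mul_pos_of_mem_Icc {ε a : ℝ} (hε : -1 < ε) (ha : a ∈ Set.Icc 0 1) :
    0 < 1 + ε * a := by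
  rw [mul_comm]
  exact (rpow_pos_of_pos (by linarith) a).trans_le
    (rpow_one_add_le_one_add_mul_self hε.le ha.1 ha.2)

/-- Bernoulli's inequality `(1 + ε) ^ a ≤ 1 + ε a` for `a ∈ [0, 1]`, after taking logarithms. -/
theorem sum_mul_log_one_add_le_log_prod {ε : ℝ} (hε : -1 < ε) {a : ℕ → ℝ} {s : ℕ}
    (ha : ∀ ℓ < s, a ℓ ∈ Set.Icc 0 1) :
    (∑ ℓ ∈ range s, a ℓ) * log (1 + ε) ≤ log (∏ ℓ ∈ range s, (1 + ε * a ℓ)) := by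
  rw [log_prod fun ℓ hℓ => (one_add_mul_pos_of_mem_Icc hε (ha ℓ (mem_range.1 hℓ))).ne',
    sum_mul]
  refine sum_le_sum fun ℓ hℓ => ?_
  obtain ⟨h0, h1⟩ := ha ℓ (mem_range.1 hℓ)
  rw [← log_rpow (by linarith), mul_comm ε]
  exact log_le_log (rpow_pos_of_pos (by linarith) _)
    (rpow_one_add_le_one_add_mul_self hε.le h0 h1)

noncomputable section MultiplicativeWeights

variable {ι : Type*}

def mwWeight (ε : ℝ) (g : ℕ → ι → ℝ) (t : ℕ) (j : ι) : ℝ :=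
  ∏ ℓ ∈ range t, (1 + ε * g ℓ j)

variable {ε : ℝ} {g : ℕ → ι → ℝ} {s t : ℕ}

theorem mwWeight_succ (j : ι) :
    mwWeight ε g (t + 1) j = mwWeight ε g t j * (1 + ε * g t j) :=
  prod_range_succ _ _

theorem mwWeight_nonneg (hg : ∀ ℓ < t, ∀ j, 0 ≤ 1 + ε * g ℓ j) (j : ι) :
    0 ≤ mwWeight ε g t j :=
  prod_nonneg fun ℓ hℓ => hg ℓ (mem_range.1 hℓ) j

variable [Fintype ι]

def mwPotential (ε : ℝ) (g : ℕ → ι → ℝ) (t : ℕ) : ℝ :=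
  ∑ j, mwWeight ε g t j

def mwDualValue (ε : ℝ) (g : ℕ → ι → ℝ) (t : ℕ) : ℝ :=
  (∑ j, mwWeight ε g t j * g t j) / mwPotential ε g t

theorem mwPotential_zero : mwPotential ε g 0 = Fintype.card ι := by
  simp [mwPotential, mwWeight]

theorem mwPotential_succ (hw : ∀ j, 0 ≤ mwWeight ε g t j) :
    mwPotential ε g (t + 1) = mwPotential ε g t * (1 + ε * mwDualValue ε g t) := by
  have hdual : mwPotential ε g t * mwDualValue ε g t = ∑ j, mwWeight ε g t j * g t j := by
    by_cases h0 : mwPotential ε g t = 0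
    · have hw0 := (sum_eq_zero_iff_of_nonneg fun j _ => hw j).1 h0
      simp [h0, hw0]
    · exact mul_div_cancel₀ _ h0
  rw [mul_add, mul_one, mul_left_comm, hdual, mul_sum]
  simp only [mwPotential, mwWeight_succ, mul_add, mul_one, sum_add_distrib]
  congr 1
  exact sum_congr rfl fun j _ => by ring

theorem mwPotential_le_card_mul_exp (hg : ∀ ℓ < s, ∀ j, 0 ≤ 1 + ε * g ℓ j) :
    mwPotential ε g s ≤ Fintype.card ι * exp (ε * ∑ t ∈ range s, mwDualValue ε g t) := by
  induction s with
  | zero => simp [mwPotential_zero]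
  | succ s ih =>
    have hw := mwWeight_nonneg fun ℓ hℓ => hg ℓ (hℓ.trans s.lt_succ_self)
    have hΦ : 0 ≤ mwPotential ε g s := sum_nonneg fun j _ => hw j
    rw [mwPotential_succ hw, sum_range_succ, mul_add ε, exp_add, ← mul_assoc]
    calc mwPotential ε g s * (1 + ε * mwDualValue ε g s)
        ≤ mwPotential ε g s * exp (ε * mwDualValue ε g s) := by
          rw [add_comm 1]
          exact mul_le_mul_of_nonneg_left (add_one_le_exp _) hΦ
      _ ≤ _ := mul_le_mul_of_nonneg_right
          (ih fun ℓ hℓ => hg ℓ (hℓ.trans s.lt_succ_self)) (exp_pos _).le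

theorem sum_mul_log_one_add_le_log_card_add (hε : -1 < ε)
    (hg : ∀ ℓ < s, ∀ j, g ℓ j ∈ Set.Icc 0 1) (j : ι) :
    (∑ ℓ ∈ range s, g ℓ j) * log (1 + ε)
      ≤ log (Fintype.card ι) + ε * ∑ t ∈ range s, mwDualValue ε g t := by
  have hstep : ∀ ℓ < s, ∀ j, 0 < 1 + ε * g ℓ j := fun ℓ hℓ j =>
    one_add_mul_pos_of_mem_Icc hε (hg ℓ hℓ j)
  have : Nonempty ι := ⟨j⟩
  have hw : 0 < mwWeight ε g s j := prod_pos fun ℓ hℓ => hstep ℓ (mem_range.1 hℓ) j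
  have hwΦ : mwWeight ε g s j ≤ mwPotential ε g s :=
    single_le_sum (fun i _ => mwWeight_nonneg (fun ℓ hℓ i => (hstep ℓ hℓ i).le) i)
      (mem_univ j)
  have hcard : (Fintype.card ι : ℝ) ≠ 0 := Nat.cast_ne_zero.2 Fintype.card_ne_zero
  calc (∑ ℓ ∈ range s, g ℓ j) * log (1 + ε)
      ≤ log (mwWeight ε g s j) := sum_mul_log_one_add_le_log_prod hε fun ℓ hℓ => hg ℓ hℓ j
    _ ≤ log (mwPotential ε g s) := log_le_log hw hwΦ
    _ ≤ log (Fintype.card ι * exp (ε * ∑ t ∈ range s, mwDualValue ε g t)) :=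
        log_le_log (hw.trans_le hwΦ)
          (mwPotential_le_card_mul_exp fun ℓ hℓ i => (hstep ℓ hℓ i).le)
    _ = log (Fintype.card ι) + ε * ∑ t ∈ range s, mwDualValue ε g t := by
        rw [log_mul hcard (exp_pos _).ne', log_exp]

end MultiplicativeWeights

theorem packing_duality_gap_general (n m s : ℕ)
    (ε : ℝ) (hε : 0 < ε)
    (P : Set (Fin n → ℝ)) (f : (Fin n → ℝ) → Fin m → ℝ)
    (hf : ∀ x ∈ P, ∀ j, f x j ∈ Set.Icc (0 : ℝ) 1)
    (x : ℕ → Fin n → ℝ) (hx : ∀ ℓ < s, x ℓ ∈ P)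
    (Y : ℕ → Fin m → ℝ)
    (hY : ∀ t, ∀ j, Y t j = ∏ ℓ ∈ Finset.range t, (1 + ε * f (x ℓ) j))
    (v : ℕ → ℝ)
    (hv : ∀ t < s, v t = (∑ j, Y t j * f (x t) j) / (∑ j, Y t j))
    (vbar lambar : ℝ)
    (hvbar : vbar = (1 / (s : ℝ)) * ∑ t ∈ Finset.range s, v t)
    (hlambar : lambar = ⨆ j, (1 / (s : ℝ)) * ∑ ℓ ∈ Finset.range s, f (x ℓ) j)
    (lamstar : ℝ) (hlamstar : 0 < lamstar) (hle : lamstar ≤ lambar)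
    (hs : (1 + ε) * Real.log m / (lamstar * ((1 + ε) * Real.log (1 + ε) - ε))
            ≤ (s : ℝ)) :
    lambar ≤ (1 + ε) * vbar := by
  set g : ℕ → Fin m → ℝ := fun ℓ j => f (x ℓ) j
  have hY' : Y = mwWeight ε g := funext₂ hY
  have hv' : ∑ t ∈ range s, v t = ∑ t ∈ range s, mwDualValue ε g t :=
    sum_congr rfl fun t ht => by rw [hv t (mem_range.1 ht), hY']; rfl
  -- both degenerate cases `m = 0` and `s = 0` would give `lambar = 0`
  obtain ⟨j₀, hj₀⟩ : ∃ j, (1 / (s : ℝ)) * ∑ ℓ ∈ range s, g ℓ j = lambar := by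
    cases isEmpty_or_nonempty (Fin m)
    · simp only [hlambar, Real.iSup_of_isEmpty] at hle
      linarith
    · exact hlambar ▸ exists_eq_ciSup_of_finite
  have hsR : (0 : ℝ) < s := by
    rcases Nat.eq_zero_or_pos s with rfl | hs0
    · simp only [CharP.cast_eq_zero, div_zero, range_zero, sum_empty, mul_zero] at hj₀; linarith
    · exact_mod_cast hs0
  have hregret := sum_mul_log_one_add_le_log_card_add (ε := ε) (by linarith)
    (fun ℓ hℓ j => hf _ (hx ℓ hℓ) j) j₀
  rw [Fintype.card_fin, ← hv'] at hregret
  have hb := one_add_mul_log_one_add_sub_self_pos hε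
  have hlogm := (div_le_iff₀ (mul_pos hlamstar hb)).1 hs
  have hF : ∑ ℓ ∈ range s, g ℓ j₀ = s * lambar := by
    rw [← hj₀]; field_simp
  have hV : ∑ t ∈ range s, v t = s * vbar := by
    rw [hvbar]; field_simp
  rw [hF, hV] at hregret
  have hgap : s * ε * lambar ≤ s * ε * ((1 + ε) * vbar) := by
    linarith [mul_le_mul_of_nonneg_left hregret (by linarith : (0 : ℝ) ≤ 1 + ε),
      mul_le_mul_of_nonneg_left (mul_le_mul_of_nonneg_right hle hb.le) hsR.le]
  exact le_of_mul_le_mul_left hgap (mul_pos hsR hε)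

/-- **Packing corollary** (normalized, Corollary 8 of the paper).
Under the setup of the packing invariant, if `0 < lamstar ≤ lambar` and
`s ≥ (1+ε)·ln m / (lamstar·b(ε))` with `b(ε) = (1+ε)ln(1+ε) − ε`, then
`lambar ≤ (1+ε)·vbar`. -/
theorem packing_duality_gap (n m s : ℕ) (hm : 1 ≤ m)
    (ε : ℝ) (hε : 0 < ε)
    (P : Set (Fin n → ℝ)) (f : (Fin n → ℝ) → Fin m → ℝ)
    (hf : ∀ x ∈ P, ∀ j, f x j ∈ Set.Icc (0 : ℝ) 1)
    (x : ℕ → Fin n → ℝ) (hx : ∀ ℓ < s, x ℓ ∈ P)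
    (Y : ℕ → Fin m → ℝ)
    (hY : ∀ t, ∀ j, Y t j = ∏ ℓ ∈ Finset.range t, (1 + ε * f (x ℓ) j))
    (v : ℕ → ℝ)
    (hv : ∀ t < s, v t = (∑ j, Y t j * f (x t) j) / (∑ j, Y t j))
    (vbar lambar : ℝ)
    (hvbar : vbar = (1 / (s : ℝ)) * ∑ t ∈ Finset.range s, v t)
    (hlambar : lambar = ⨆ j, (1 / (s : ℝ)) * ∑ ℓ ∈ Finset.range s, f (x ℓ) j)
    (lamstar : ℝ) (hlamstar : 0 < lamstar) (hle : lamstar ≤ lambar)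
    (hs : (1 + ε) * Real.log m / (lamstar * ((1 + ε) * Real.log (1 + ε) - ε))
            ≤ (s : ℝ)) :
    lambar ≤ (1 + ε) * vbar :=
  packing_duality_gap_general n m s ε hε P f hf x hx Y hY v hv vbar lambar hvbar hlambar lamstar
    hlamstar hle hs
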